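/- arXiv:1106.0755 — 10 statements merged into one kernel-verified Lean document; each statement's English description precedes it below -/
import Mathlib

section
/- Let a, b, c, d ∈ ℝ[z] and f ∈ ℝ[z][t], and let λ ∈ ℝ with λ ≠ 0. Define X : ℝ³ → ℝ³ by X(x,y,z) = λ(x,y,z) + ( -b(z)·f(z, a(z)x + b(z)y) + c(z), a(z)·f(z, a(z)x + b(z)y) + d(z), 0 ). Then X is injective. -/
open Polynomial

/-- X = λI + (P,Q,0) with P,Q from the normal form is injective. -/
theorem stmt0 (a b c d : ℝ[X]) (f : Polynomial (Polynomial ℝ)) (l : ℝ) (hl : l ≠ 0)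
    (X : ℝ × ℝ × ℝ → ℝ × ℝ × ℝ)
    (hX : ∀ p : ℝ × ℝ × ℝ, X p =
      (l * p.1 + (-(b.eval p.2.2) *
          ((f.eval (Polynomial.C (a.eval p.2.2 * p.1 + b.eval p.2.2 * p.2.1))).eval p.2.2)
          + c.eval p.2.2),
       l * p.2.1 + ((a.eval p.2.2) *
          ((f.eval (Polynomial.C (a.eval p.2.2 * p.1 + b.eval p.2.2 * p.2.1))).eval p.2.2)
          + d.eval p.2.2),
       l * p.2.2)) :
    Function.Injective X := by
  intro p q h
  obtain ⟨x, y, z⟩ := p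
  obtain ⟨x', y', z'⟩ := q
  rw [hX, hX] at h
  simp only [Prod.mk.injEq] at h ⊢
  obtain ⟨h1, h2, h3⟩ := h
  have hz : z = z' := mul_left_cancel₀ hl h3
  subst hz
  set A := a.eval z with hA
  set B := b.eval z with hB
  have hcomb : l * (A * x + B * y) = l * (A * x' + B * y') := by
    linear_combination A * h1 + B * h2
  have key : A * x + B * y = A * x' + B * y' := mul_left_cancel₀ hl hcomb
  have hf : (f.eval (Polynomial.C (A * x + B * y))).eval z
      = (f.eval (Polynomial.C (A * x' + B * y'))).eval z := by rw [key]
  have hx : x = x' := mul_left_cancel₀ hl (by rw [hf] at h1; linarith)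
  have hy : y = y' := mul_left_cancel₀ hl (by rw [hf] at h2; linarith)
  exact ⟨hx, hy, rfl⟩
end

section
/- Let λ < 0, k an odd positive integer, u₀ = (6λ)^{1/k}, and z₀ ≠ 0. Then the curve γ(t) = ( (3u₀/z₀)·e^{−λt}, (−2u₀/z₀²)·e^{−2λt}, z₀·e^{λt} ) is a solution of the ODE (ẋ, ẏ, ż) = λ(x,y,z) + z^{k-1}(x+yz)^{k+1}·(−z, 1, 0), and ‖γ(t)‖ → ∞ as t → +∞. -/
/-!
Writing `z = z₀ e^{λt}`, the curve is `(3u₀/z, -2u₀/z², z)`, on which `x + yz = u₀/z`.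
Hence the nonlinear terms collapse to `z^k (u₀/z)^{k+1} = u₀^{k+1}/z = 6λu₀/z = 2λx` and
`z^{k-1} (u₀/z)^{k+1} = 6λu₀/z² = -3λy`, so the field at `γ(t)` is `(-λx, -2λy, λz)`,
which is exactly the derivative of the three exponentials. The first coordinate grows
like `e^{-λt}` with `-λ > 0`.
-/

open Real Filter

lemma hasDerivAt_const_mul_exp_mul (c a t : ℝ) :
    HasDerivAt (fun s => c * exp (a * s)) (a * (c * exp (a * t))) t :=
  ((((hasDerivAt_id' t).const_mul a).exp).const_mul c).congr_deriv (by ring)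

lemma tendsto_abs_const_mul_exp_mul_atTop {c a : ℝ} (hc : c ≠ 0) (ha : 0 < a) :
    Tendsto (fun t => |c * exp (a * t)|) atTop atTop := by
  simp_rw [abs_mul, abs_of_pos (exp_pos _)]
  exact (tendsto_exp_atTop.comp (tendsto_id.const_mul_atTop ha)).const_mul_atTop (abs_pos.2 hc)

section Orbit

variable {u z : ℝ}

lemma orbit_add_mul_eq (hz : z ≠ 0) : 3 * u / z + -2 * u / z ^ 2 * z = u / z := by
  field_simp
  ring

lemma pow_mul_div_pow_succ (hz : z ≠ 0) (m : ℕ) : z ^ m * (u / z) ^ (m + 1) = u ^ (m + 1) / z := by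
  rw [div_pow, pow_succ' z]
  field_simp

variable {l : ℝ} {k : ℕ}

lemma orbit_field_fst (hu : u ^ k = 6 * l) (hz : z ≠ 0) :
    l * (3 * u / z) - z ^ k * (3 * u / z + -2 * u / z ^ 2 * z) ^ (k + 1) = -l * (3 * u / z) := by
  rw [orbit_add_mul_eq hz, pow_mul_div_pow_succ hz, pow_succ, hu]
  ring

lemma orbit_field_snd (hk : 1 ≤ k) (hu : u ^ k = 6 * l) (hz : z ≠ 0) :
    l * (-2 * u / z ^ 2) + z ^ (k - 1) * (3 * u / z + -2 * u / z ^ 2 * z) ^ (k + 1) =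
      -2 * l * (-2 * u / z ^ 2) := by
  have hk' : k + 1 = (k - 1) + 1 + 1 := by omega
  rw [orbit_add_mul_eq hz, hk', pow_succ (u / z), ← mul_assoc, pow_mul_div_pow_succ hz,
    Nat.sub_add_cancel hk, pow_succ, hu]
  field_simp
  ring

end Orbit

lemma orbit_exp_eq_div (u z0 l t : ℝ) :
    ((3 * u / z0 * exp (-l * t), -2 * u / z0 ^ 2 * exp (-2 * l * t), z0 * exp (l * t)) :
        ℝ × ℝ × ℝ) =
      (3 * u / (z0 * exp (l * t)), -2 * u / (z0 * exp (l * t)) ^ 2, z0 * exp (l * t)) := by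
  have h1 : exp (-l * t) = (exp (l * t))⁻¹ := by rw [neg_mul, exp_neg]
  have h2 : exp (-2 * l * t) = (exp (l * t))⁻¹ ^ 2 := by
    rw [← exp_neg, ← exp_nat_mul]
    ring_nf
  rw [h1, h2]
  field_simp

theorem stmt3_general (l : ℝ) (hl : l < 0) (k : ℕ) (hk1 : 1 ≤ k)
    (u0 : ℝ) (hu0 : u0 ^ k = 6 * l) (z0 : ℝ) (hz0 : z0 ≠ 0)
    (γ : ℝ → ℝ × ℝ × ℝ)
    (hγ : ∀ t, γ t = (3 * u0 / z0 * Real.exp (-l * t),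
                      -2 * u0 / z0 ^ 2 * Real.exp (-2 * l * t),
                      z0 * Real.exp (l * t)))
    (F : ℝ × ℝ × ℝ → ℝ × ℝ × ℝ)
    (hF : ∀ p, F p = (l * p.1 - p.2.2 ^ k * (p.1 + p.2.1 * p.2.2) ^ (k + 1),
                      l * p.2.1 + p.2.2 ^ (k - 1) * (p.1 + p.2.1 * p.2.2) ^ (k + 1),
                      l * p.2.2)) :
    (∀ t, HasDerivAt γ (F (γ t)) t) ∧
    Filter.Tendsto (fun t => ‖γ t‖) Filter.atTop Filter.atTop := by
  have hFγ (t : ℝ) : F (γ t) = (-l * (γ t).1, -2 * l * (γ t).2.1, l * (γ t).2.2) := by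
    have hz : z0 * exp (l * t) ≠ 0 := mul_ne_zero hz0 (exp_pos _).ne'
    rw [hF, hγ t, orbit_exp_eq_div]
    exact Prod.ext (orbit_field_fst hu0 hz) (Prod.ext (orbit_field_snd hk1 hu0 hz) rfl)
  have hu0_ne : u0 ≠ 0 := by
    rintro rfl
    rw [zero_pow (by omega)] at hu0
    linarith
  refine ⟨fun t => ?_, ?_⟩
  · rw [hFγ t, funext hγ]
    exact (hasDerivAt_const_mul_exp_mul _ _ t).prodMk
      ((hasDerivAt_const_mul_exp_mul _ _ t).prodMk (hasDerivAt_const_mul_exp_mul _ _ t))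
  · refine tendsto_atTop_mono (fun t => ?_) (tendsto_abs_const_mul_exp_mul_atTop
      (div_ne_zero (mul_ne_zero three_ne_zero hu0_ne) hz0) (neg_pos.2 hl))
    calc |3 * u0 / z0 * exp (-l * t)| = ‖(γ t).1‖ := by rw [hγ t, Real.norm_eq_abs]
      _ ≤ ‖γ t‖ := norm_fst_le (γ t)

/-- γ(t) = (3u₀/z₀·e^{−λt}, −2u₀/z₀²·e^{−2λt}, z₀e^{λt}) solves
the system ẋ = F(x) and escapes to infinity. -/
theorem stmt3 (l : ℝ) (hl : l < 0) (k : ℕ) (hk : Odd k) (hk1 : 1 ≤ k)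
    (u0 : ℝ) (hu0 : u0 ^ k = 6 * l) (z0 : ℝ) (hz0 : z0 ≠ 0)
    (γ : ℝ → ℝ × ℝ × ℝ)
    (hγ : ∀ t, γ t = (3 * u0 / z0 * Real.exp (-l * t),
                      -2 * u0 / z0 ^ 2 * Real.exp (-2 * l * t),
                      z0 * Real.exp (l * t)))
    (F : ℝ × ℝ × ℝ → ℝ × ℝ × ℝ)
    (hF : ∀ p, F p = (l * p.1 - p.2.2 ^ k * (p.1 + p.2.1 * p.2.2) ^ (k + 1),
                      l * p.2.1 + p.2.2 ^ (k - 1) * (p.1 + p.2.1 * p.2.2) ^ (k + 1),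
                      l * p.2.2)) :
    (∀ t, HasDerivAt γ (F (γ t)) t) ∧
    Filter.Tendsto (fun t => ‖γ t‖) Filter.atTop Filter.atTop :=
  stmt3_general l hl k hk1 u0 hu0 z0 hz0 γ hγ F hF
end

section
/- Let λ, v₁, α, b₁ ∈ ℝ with v₁α ≠ 0 and λ ≠ 1, and let g : ℝ → ℝ be a polynomial with g(0) = 0. Define F(x,y,z) = λ(x,y,z) + (0, v₁z, 0) + g(t)·(1, −(b₁ + 2v₁αx), αg(t)), where t = y + b₁x + v₁αx². If F(x₀,y₀,z₀) = (x₀,y₀,z₀), then (x₀,y₀,z₀) = (0,0,0). -/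
/-- the only fixed point of F = λI + (0,v₁z,0) + g(t)(1, −(b₁+2v₁αx), αg(t))
is the origin. -/
theorem stmt5 (l v1 α b1 : ℝ) (hv : v1 * α ≠ 0) (hl : l ≠ 1)
    (g : Polynomial ℝ) (hg : g.eval 0 = 0)
    (F : ℝ × ℝ × ℝ → ℝ × ℝ × ℝ)
    (hF : ∀ p : ℝ × ℝ × ℝ, F p =
      (l * p.1 + g.eval (p.2.1 + b1 * p.1 + v1 * α * p.1 ^ 2),
       l * p.2.1 + v1 * p.2.2
         - (b1 + 2 * v1 * α * p.1) * g.eval (p.2.1 + b1 * p.1 + v1 * α * p.1 ^ 2),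
       l * p.2.2 + α * (g.eval (p.2.1 + b1 * p.1 + v1 * α * p.1 ^ 2)) ^ 2))
    (p : ℝ × ℝ × ℝ) (hp : F p = p) : p = (0, 0, 0) := by
  obtain ⟨x, y, z⟩ := p
  rw [hF] at hp
  simp only [Prod.mk.injEq] at hp
  obtain ⟨h1, h2, h3⟩ := hp
  set G := g.eval (y + b1 * x + v1 * α * x ^ 2) with hG
  have hs : (1 : ℝ) - l ≠ 0 := sub_ne_zero.mpr (fun h => hl h.symm)
  have ht : (y + b1 * x + v1 * α * x ^ 2) * (1 - l) ^ 2 = 0 := by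
    linear_combination (-(1 - l)) * h2 + (-v1) * h3
      + (-b1 * (1 - l) + v1 * α * (G - (1 - l) * x)) * h1
  have ht0 : y + b1 * x + v1 * α * x ^ 2 = 0 := by
    have := mul_eq_zero.mp ht
    rcases this with h | h
    · exact h
    · exact absurd h (pow_ne_zero 2 hs)
  have hG0 : G = 0 := by rw [hG, ht0, hg]
  have hx : x = 0 := by
    have : (1 - l) * x = 0 := by linarith [h1, hG0]
    rcases mul_eq_zero.mp this with h | h
    · exact absurd h hs
    · exact h
  have hz : z = 0 := by
    have : (1 - l) * z = 0 := by linear_combination -h3 + α * G * hG0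
    rcases mul_eq_zero.mp this with h | h
    · exact absurd h hs
    · exact h
  have hy : y = 0 := by
    have : (1 - l) * y = 0 := by
      linear_combination -h2 + v1 * hz - (b1 + 2 * v1 * α * x) * hG0
    rcases mul_eq_zero.mp this with h | h
    · exact absurd h hs
    · exact h
  simp [hx, hy, hz]
end

section
/- Let λ, v₁, α, b₁ ∈ ℝ with β := v₁α ≠ 0 and −1 < λ < 1. Define F(x,y,z) = λ(x,y,z) + (0, v₁z, 0) + t·(1, −(b₁ + 2βx), αt) where t = y + b₁x + βx². If F(F(p)) = p for some p ∈ ℝ³, then p = (0,0,0). -/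
set_option maxHeartbeats 1000000 in
/-- for g(t) = t, the only periodic point of period two of F is the origin. -/
theorem stmt6 (l v1 α b1 : ℝ) (hβ : v1 * α ≠ 0) (hl1 : -1 < l) (hl2 : l < 1)
    (F : ℝ × ℝ × ℝ → ℝ × ℝ × ℝ)
    (hF : ∀ p : ℝ × ℝ × ℝ, F p =
      (l * p.1 + (p.2.1 + b1 * p.1 + v1 * α * p.1 ^ 2),
       l * p.2.1 + v1 * p.2.2
         - (b1 + 2 * v1 * α * p.1) * (p.2.1 + b1 * p.1 + v1 * α * p.1 ^ 2),
       l * p.2.2 + α * (p.2.1 + b1 * p.1 + v1 * α * p.1 ^ 2) ^ 2))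
    (p : ℝ × ℝ × ℝ) (hp : F (F p) = p) : p = (0, 0, 0) := by
  obtain ⟨x, y, z⟩ := p
  simp only [hF, Prod.mk.injEq] at hp
  obtain ⟨e1, e2, e3⟩ := hp
  have hd : (0:ℝ) < 1 - l^2 := by nlinarith
  obtain ⟨T, hT⟩ : ∃ t : ℝ, t = y + b1*x + v1*α*x^2 := ⟨_, rfl⟩
  obtain ⟨X1, hX1⟩ : ∃ t : ℝ, t = l*x + T := ⟨_, rfl⟩
  obtain ⟨Y1, hY1⟩ : ∃ t : ℝ, t = l*y + v1*z - (b1 + 2*v1*α*x)*T := ⟨_, rfl⟩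
  obtain ⟨Z1, hZ1⟩ : ∃ t : ℝ, t = l*z + α*T^2 := ⟨_, rfl⟩
  obtain ⟨T1, hT1⟩ : ∃ t : ℝ, t = Y1 + b1*X1 + v1*α*X1^2 := ⟨_, rfl⟩
  have G1 : l*X1 + T1 = x := by
    simp only [hT1, hY1, hX1, hZ1, hT]; linear_combination e1
  have G2 : l*Y1 + v1*Z1 - (b1 + 2*v1*α*X1)*T1 = y := by
    simp only [hT1, hY1, hX1, hZ1, hT]; linear_combination e2
  have G3 : l*Z1 + α*T1^2 = z := by
    simp only [hT1, hY1, hX1, hZ1, hT]; linear_combination e3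
  have kd : (T1 - T) * ((1+l) * (1-l^2)^2) = 0 := by
    linear_combination (b1 + v1*α*T1 + 2*v1*α*T + l*v1*α*X1 + (-1)*l*v1*α*T1 + (-2)*l*v1*α*T + (-2)*l^2*b1 + (-1)*l^2*v1*α*X1 + (-1)*l^2*v1*α*T1 + (-2)*l^2*v1*α*T + (-1)*l^3*v1*α*X1 + l^3*v1*α*T1 + 2*l^3*v1*α*T + l^4*b1 + l^4*v1*α*X1 + x*v1*α + x*l*v1*α + (-3)*x*l^2*v1*α + (-1)*x*l^3*v1*α + 2*x*l^4*v1*α) * G1 + (1 + (-2)*l^2 + l^4) * G2 + ((-1)*v1 + l*v1 + l^2*v1 + (-1)*l^3*v1) * G3 + (1 + 2*v1*α*X1 + (-2)*v1*α*T + l + (-2)*l*v1*α*X1 + 2*l*v1*α*T + (-2)*l^2 + (-2)*l^2*v1*α*X1 + 2*l^2*v1*α*T + (-2)*l^3 + 2*l^3*v1*α*X1 + (-2)*l^3*v1*α*T + l^4 + l^5 + (-2)*x*l*v1*α + 2*x*l^2*v1*α + 2*x*l^3*v1*α + (-2)*x*l^4*v1*α) * hT1 + (1 + 2*v1*α*X1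 + (-2)*v1*α*T + (-2)*l*v1*α*X1 + 2*l*v1*α*T + (-2)*l^2 + (-2)*l^2*v1*α*X1 + 2*l^2*v1*α*T + 2*l^3*v1*α*X1 + (-2)*l^3*v1*α*T + l^4 + (-2)*x*l*v1*α + 2*x*l^2*v1*α + 2*x*l^3*v1*α + (-2)*x*l^4*v1*α) * hY1 + (b1 + v1*α*X1 + v1*α*T + 2*v1*α*b1*X1 + (-2)*v1*α*b1*T + 2*v1^2*α^2*X1^2 + l*v1*α*X1 + (-1)*l*v1*α*T + (-2)*l*v1*α*b1*X1 + 2*l*v1*α*b1*T + (-2)*l*v1^2*α^2*X1^2 + (-2)*l^2*b1 + (-3)*l^2*v1*α*X1 + (-1)*l^2*v1*α*T + (-2)*l^2*v1*α*b1*X1 + 2*l^2*v1*α*b1*T + (-2)*l^2*v1^2*α^2*X1^2 + (-1)*l^3*v1*α*X1 + l^3*v1*α*T + 2*l^3*v1*α*b1*X1 + (-2)*l^3*v1*α*b1*T + 2*l^3*v1^2*α^2*X1^2 + l^4*b1 + 2*l^4*v1*α*X1 + 2*z*v1^2*α + (-2)*z*l*v1^2*α + (-2)*z*l^2*v1^2*α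 + 2*z*l^3*v1^2*α + 2*y*l*v1*α + (-2)*y*l^2*v1*α + (-2)*y*l^3*v1*α + 2*y*l^4*v1*α + (-4)*x*v1^2*α^2*T + x*l*v1*α + 4*x*l*v1^2*α^2*T + (-1)*x*l^2*v1*α + 4*x*l^2*v1^2*α^2*T + (-1)*x*l^3*v1*α + (-4)*x*l^3*v1^2*α^2*T + x*l^4*v1*α) * hX1 + ((-1)*v1 + l*v1 + l^2*v1 + (-1)*l^3*v1) * hZ1 + ((-1) + (-1)*l + 2*l^2 + 2*l^3 + (-1)*l^4 + (-1)*l^5) * hT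
  have hTT : T1 = T := by
    have hpos : (0:ℝ) < (1+l) * (1-l^2)^2 := mul_pos (by linarith) (pow_pos hd 2)
    rcases mul_eq_zero.mp kd with h | h
    · linarith [sub_eq_zero.mp h]
    · exact absurd h (ne_of_gt hpos)
  have ks : (T1 + T) * ((1-l) * (1-l^2)^2) - 2*(v1*α)*(1-l)*(T - T1)^2 = 0 := by
    linear_combination ((-1)*b1 + (-1)*v1*α*T1 + 2*v1*α*T + (-1)*l*v1*α*X1 + 3*l*v1*α*T1 + (-2)*l*v1*α*T + 2*l^2*b1 + l^2*v1*α*X1 + (-1)*l^2*v1*α*T1 + l^3*v1*α*X1 + (-1)*l^3*v1*α*T1 + (-1)*l^4*b1 + (-1)*l^4*v1*α*X1 + (-1)*x*v1*α + x*l*v1*α + x*l^2*v1*α + (-1)*x*l^3*v1*α) * G1 + ((-1) + 2*l^2 + (-1)*l^4) * G2 + ((-1)*v1 + (-1)*l*v1 + l^2*v1 + l^3*v1) * G3 + (1 + (-2)*v1*α*X1 + 2*v1*α*T + (-1)*l + 2*l*v1*α*X1 + (-2)*l*v1*α*T + (-2)*l^2 + 2*l^3 + l^4 + (-1)*l^5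 + 2*x*l*v1*α + (-2)*x*l^2*v1*α) * hT1 + (1 + (-2)*v1*α*X1 + 2*v1*α*T + 2*l*v1*α*X1 + (-2)*l*v1*α*T + (-2)*l^2 + l^4 + 2*x*l*v1*α + (-2)*x*l^2*v1*α) * hY1 + (b1 + v1*α*X1 + v1*α*T + (-2)*v1*α*b1*X1 + 2*v1*α*b1*T + (-2)*v1^2*α^2*X1^2 + (-1)*l*v1*α*X1 + (-3)*l*v1*α*T + 2*l*v1*α*b1*X1 + (-2)*l*v1*α*b1*T + 2*l*v1^2*α^2*X1^2 + (-2)*l^2*b1 + (-1)*l^2*v1*α*X1 + l^2*v1*α*T + l^3*v1*α*X1 + l^3*v1*α*T + l^4*b1 + (-2)*z*v1^2*α + 2*z*l*v1^2*α + (-2)*y*l*v1*α + 2*y*l^2*v1*α + 4*x*v1^2*α^2*T + x*l*v1*α + (-4)*x*l*v1^2*α^2*T + (-1)*x*l^2*v1*α + (-1)*x*l^3*v1*α + x*l^4*v1*α) * hX1 + (v1 + l*v1 + (-1)*l^2*v1 + (-1)*l^3*v1) * hZ1 + (1 + (-1)*l + (-2)*l^2 + 2*l^3 + l^4 + (-1)*l^5)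 * hT
  have hT0 : T = 0 := by
    have h2 : (2 * T) * ((1-l) * (1-l^2)^2) = 0 := by
      rw [hTT] at ks; linarith [ks]
    have hpos : (0:ℝ) < (1-l) * (1-l^2)^2 := mul_pos (by linarith) (pow_pos hd 2)
    rcases mul_eq_zero.mp h2 with h | h
    · linarith
    · exact absurd h (ne_of_gt hpos)
  have hT10 : T1 = 0 := by rw [hTT, hT0]
  have hx0 : x = 0 := by
    have hx : x * (1 - l^2) = l*T + T1 := by
      linear_combination ((-1)) * G1 + (l) * hX1
    rw [hT0, hT10] at hx
    have hx' : x * (1 - l^2) = 0 := by linarith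
    rcases mul_eq_zero.mp hx' with h | h
    · exact h
    · exact absurd h (ne_of_gt hd)
  have hz0 : z = 0 := by
    have hz : z * (1 - l^2) = α * (l*T^2 + T1^2) := by
      linear_combination ((-1)) * G3 + (l) * hZ1
    rw [hT0, hT10] at hz
    have hz' : z * (1 - l^2) = 0 := by linarith [hz]
    rcases mul_eq_zero.mp hz' with h | h
    · exact h
    · exact absurd h (ne_of_gt hd)
  have hy0 : y = 0 := by
    rw [hx0] at hT
    rw [hT0] at hT
    linarith [hT.symm]
  exact Prod.ext hx0 (Prod.ext hy0 hz0)
end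

section
/- Let −1 < λ < 1, A ≠ 0, β := v₁α ≠ 0, b₁ ∈ ℝ, and define F(x,y,z) = λ(x,y,z) + (0, v₁z, 0) + A·t·(1, −(b₁ + 2βx), αAt) with t = y + b₁x + βx². Set x₀ = (1+λ+λ²)(1+4λ²+λ⁴)/(Aβ(1−λ)³), y₀ = −(1+λ+λ²)/(A²β(1−λ)⁶)·[λ(1+λ+λ²)(4+λ+8λ²+11λ³+4λ⁴+7λ⁵+λ⁷) + Ab₁(1−λ)³(1+4λ²+λ⁴)], z₀ = (1+λ+λ²)³(1+3λ²+4λ³+3λ⁴+λ⁶)/(v₁A²β(1−λ)⁵). Then F³(x₀,y₀,z₀) = (x₀,y₀,z₀) and (x₀,y₀,z₀) ≠ (0,0,0). -/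
set_option maxHeartbeats 1600000

/-- for g(t) = A·t, the explicit point (x₀,y₀,z₀) is a nontrivial
periodic point of period three of F. -/
theorem stmt7 (l v1 α b1 A : ℝ) (hl1 : -1 < l) (hl2 : l < 1) (hA : A ≠ 0)
    (hβ : v1 * α ≠ 0)
    (F : ℝ × ℝ × ℝ → ℝ × ℝ × ℝ)
    (hF : ∀ p : ℝ × ℝ × ℝ, F p =
      (l * p.1 + A * (p.2.1 + b1 * p.1 + v1 * α * p.1 ^ 2),
       l * p.2.1 + v1 * p.2.2
         - (b1 + 2 * v1 * α * p.1) * (A * (p.2.1 + b1 * p.1 + v1 * α * p.1 ^ 2)),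
       l * p.2.2 + α * (A * (p.2.1 + b1 * p.1 + v1 * α * p.1 ^ 2)) ^ 2))
    (x0 y0 z0 : ℝ)
    (hx0 : x0 = (1 + l + l ^ 2) * (1 + 4 * l ^ 2 + l ^ 4) / (A * (v1 * α) * (1 - l) ^ 3))
    (hy0 : y0 = -((1 + l + l ^ 2) / (A ^ 2 * (v1 * α) * (1 - l) ^ 6)) *
      (l * (1 + l + l ^ 2) *
        (4 + l + 8 * l ^ 2 + 11 * l ^ 3 + 4 * l ^ 4 + 7 * l ^ 5 + l ^ 7)
       + A * b1 * (1 - l) ^ 3 * (1 + 4 * l ^ 2 + l ^ 4)))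
    (hz0 : z0 = (1 + l + l ^ 2) ^ 3 * (1 + 3 * l ^ 2 + 4 * l ^ 3 + 3 * l ^ 4 + l ^ 6) /
      (v1 * A ^ 2 * (v1 * α) * (1 - l) ^ 5)) :
    F (F (F (x0, y0, z0))) = (x0, y0, z0) ∧ (x0, y0, z0) ≠ ((0 : ℝ), (0 : ℝ), (0 : ℝ)) := by
  have hv1 : v1 ≠ 0 := left_ne_zero_of_mul hβ
  have hα : α ≠ 0 := right_ne_zero_of_mul hβ
  have hm : (1 - l) ≠ 0 := by intro h; nlinarith
  have hx0ne : x0 ≠ 0 := by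
    rw [hx0]
    have h1 : (0:ℝ) < 1 + l + l ^ 2 := by nlinarith [sq_nonneg (l + 1/2)]
    have h2 : (0:ℝ) < 1 + 4 * l ^ 2 + l ^ 4 := by positivity
    exact div_ne_zero (ne_of_gt (mul_pos h1 h2))
      (mul_ne_zero (mul_ne_zero hA hβ) (pow_ne_zero _ hm))
  have e1 : F (x0, y0, z0) = (((18) + (-54) * (1 - l) + (72) * (1 - l) ^ 2 + (-51) * (1 - l) ^ 3 + (19) * (1 - l) ^ 4 + (-3) * (1 - l) ^ 5) / ((1 - l) ^ 3 * v1 * α * A), ((-324) + (1944) * (1 - l) + (-5508) * (1 - l) ^ 2 + (9612) * (1 - l) ^ 3 + (-11358) * (1 - l) ^ 4 + (9450) * (1 - l) ^ 5 + (-5595) * (1 - l) ^ 6 + (2328) * (1 - l) ^ 7 + (-653) * (1 - l) ^ 8 + (112) * (1 - l) ^ 9 + (-9) * (1 - l) ^ 10 + (-18) * (1 - l) ^ 3 * b1 * A + (54) * (1 - l) ^ 4 * b1 * A + (-72) * (1 - l) ^ 5 * b1 * A + (51) * (1 - l) ^ 6 * b1 * A + (-19) * (1 - l) ^ 7 * b1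 * A + (3) * (1 - l) ^ 8 * b1 * A) / ((1 - l) ^ 6 * v1 * α * A ^ 2), ((324) + (-1944) * (1 - l) + (5508) * (1 - l) ^ 2 + (-9612) * (1 - l) ^ 3 + (11394) * (1 - l) ^ 4 + (-9585) * (1 - l) ^ 5 + (5817) * (1 - l) ^ 6 + (-2538) * (1 - l) ^ 7 + (777) * (1 - l) ^ 8 + (-158) * (1 - l) ^ 9 + (19) * (1 - l) ^ 10 + (-1) * (1 - l) ^ 11) / ((1 - l) ^ 5 * v1 ^ 2 * α * A ^ 2)) := by
    rw [hF]
    simp only [Prod.mk.injEq]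
    subst hx0 hy0 hz0
    refine ⟨?_, ?_, ?_⟩ <;> field_simp <;> ring
  have e2 : F (((18) + (-54) * (1 - l) + (72) * (1 - l) ^ 2 + (-51) * (1 - l) ^ 3 + (19) * (1 - l) ^ 4 + (-3) * (1 - l) ^ 5) / ((1 - l) ^ 3 * v1 * α * A), ((-324) + (1944) * (1 - l) + (-5508) * (1 - l) ^ 2 + (9612) * (1 - l) ^ 3 + (-11358) * (1 - l) ^ 4 + (9450) * (1 - l) ^ 5 + (-5595) * (1 - l) ^ 6 + (2328) * (1 - l) ^ 7 + (-653) * (1 - l) ^ 8 + (112) * (1 - l) ^ 9 + (-9) * (1 - l) ^ 10 + (-18) * (1 - l) ^ 3 * b1 * A + (54) * (1 - l) ^ 4 * b1 * A + (-72) * (1 - l) ^ 5 * b1 * A + (51) * (1 - l) ^ 6 * b1 * A + (-19) * (1 - l) ^ 7 * b1 * A + (3) * (1 - l) ^ 8 * b1 * A) / ((1 - l) ^ 6 * v1 * α * A ^ 2), ((324) + (-1944) * (1 - l) + (5508) * (1 - l) ^ 2 + (-9612) * (1 - l) ^ 3 + (11394) * (1 - l) ^ 4 + (-9585) * (1 -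 l) ^ 5 + (5817) * (1 - l) ^ 6 + (-2538) * (1 - l) ^ 7 + (777) * (1 - l) ^ 8 + (-158) * (1 - l) ^ 9 + (19) * (1 - l) ^ 10 + (-1) * (1 - l) ^ 11) / ((1 - l) ^ 5 * v1 ^ 2 * α * A ^ 2)) = (((18) + (-54) * (1 - l) + (72) * (1 - l) ^ 2 + (-57) * (1 - l) ^ 3 + (28) * (1 - l) ^ 4 + (-8) * (1 - l) ^ 5 + (1) * (1 - l) ^ 6) / ((1 - l) ^ 3 * v1 * α * A), ((-324) + (1944) * (1 - l) + (-5508) * (1 - l) ^ 2 + (9828) * (1 - l) ^ 3 + (-12330) * (1 - l) ^ 4 + (11466) * (1 - l) ^ 5 + (-8106) * (1 - l) ^ 6 + (4392) * (1 - l) ^ 7 + (-1811) * (1 - l) ^ 8 + (554) * (1 - l) ^ 9 + (-119) * (1 - l) ^ 10 + (16) * (1 - l) ^ 11 + (-1) * (1 - l) ^ 12 + (-18) * (1 - l) ^ 3 * b1 * A + (54) * (1 - l) ^ 4 * b1 * A + (-72) * (1 - l) ^ 5 * b1 * A + (57) * (1 - l) ^ 6 * b1 * A + (-28) * (1 - l)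 ^ 7 * b1 * A + (8) * (1 - l) ^ 8 * b1 * A + (-1) * (1 - l) ^ 9 * b1 * A) / ((1 - l) ^ 6 * v1 * α * A ^ 2), ((324) + (-1944) * (1 - l) + (5508) * (1 - l) ^ 2 + (-9828) * (1 - l) ^ 3 + (12366) * (1 - l) ^ 4 + (-11583) * (1 - l) ^ 5 + (8274) * (1 - l) ^ 6 + (-4527) * (1 - l) ^ 7 + (1875) * (1 - l) ^ 8 + (-571) * (1 - l) ^ 9 + (121) * (1 - l) ^ 10 + (-16) * (1 - l) ^ 11 + (1) * (1 - l) ^ 12) / ((1 - l) ^ 5 * v1 ^ 2 * α * A ^ 2)) := by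
    rw [hF]
    simp only [Prod.mk.injEq]
    refine ⟨?_, ?_, ?_⟩ <;> field_simp <;> ring
  have e3 : F (((18) + (-54) * (1 - l) + (72) * (1 - l) ^ 2 + (-57) * (1 - l) ^ 3 + (28) * (1 - l) ^ 4 + (-8) * (1 - l) ^ 5 + (1) * (1 - l) ^ 6) / ((1 - l) ^ 3 * v1 * α * A), ((-324) + (1944) * (1 - l) + (-5508) * (1 - l) ^ 2 + (9828) * (1 - l) ^ 3 + (-12330) * (1 - l) ^ 4 + (11466) * (1 - l) ^ 5 + (-8106) * (1 - l) ^ 6 + (4392) * (1 - l) ^ 7 + (-1811) * (1 - l) ^ 8 + (554) * (1 - l) ^ 9 + (-119) * (1 - l) ^ 10 + (16) * (1 - l) ^ 11 + (-1) * (1 - l) ^ 12 + (-18) * (1 - l) ^ 3 * b1 * A + (54) * (1 - l) ^ 4 * b1 * A + (-72) * (1 - l) ^ 5 * b1 * A + (57) * (1 - l) ^ 6 * b1 * A + (-28) * (1 - l) ^ 7 * b1 * A + (8) * (1 - l) ^ 8 * b1 * A + (-1) * (1 - l) ^ 9 * b1 * A) / ((1 - l) ^ 6 * v1 * α * A ^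 2), ((324) + (-1944) * (1 - l) + (5508) * (1 - l) ^ 2 + (-9828) * (1 - l) ^ 3 + (12366) * (1 - l) ^ 4 + (-11583) * (1 - l) ^ 5 + (8274) * (1 - l) ^ 6 + (-4527) * (1 - l) ^ 7 + (1875) * (1 - l) ^ 8 + (-571) * (1 - l) ^ 9 + (121) * (1 - l) ^ 10 + (-16) * (1 - l) ^ 11 + (1) * (1 - l) ^ 12) / ((1 - l) ^ 5 * v1 ^ 2 * α * A ^ 2)) = (x0, y0, z0) := by
    rw [hF]
    simp only [Prod.mk.injEq]
    subst hx0 hy0 hz0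
    refine ⟨?_, ?_, ?_⟩ <;> field_simp <;> ring
  refine ⟨?_, ?_⟩
  · rw [e1, e2, e3]
  · intro h
    exact hx0ne (congrArg Prod.fst h)
end

section
/- Let n ≥ 2, λ ∈ ℝ, a ∈ ℝ[x₁] of degree r with 2 ≤ r < n, and f(x₁,x₂) = x₂ − a(x₁). Define H = (H₁,…,Hₙ) by H₁ = f, Hᵢ = x_{i+1} + ((−1)^i/(i−1)!)·a^{(i−1)}(x₁)·f^{i−1} for 2 ≤ i ≤ r, H_{r+1} = ((−1)^{r+1}/r!)·a^{(r)}(x₁)·f^r, and H_j = f^{j−1} for r+1 < j ≤ n. Then the Jacobian matrix JH is nilpotent at every point of ℝⁿ. -/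
/-!
Write `f = x₁ - a(x₀)` and `gᵢ = (-1)^(i+1)/i! · a⁽ⁱ⁾` for `i ≤ r`, `gᵢ = 1` for `i > r`. Then
uniformly `Hᵢ = [i < r] x_{i+1} + gᵢ(x₀) fⁱ` (row `0` is `x₁ - a(x₀)` since `g₀ = -a`). So the
Jacobian `J` at any point shifts `e_j ↦ e_{j-1}` for `2 ≤ j ≤ r`, kills `e_j` for `j > r`, and
sends `e₁` to `e₀ + b` with `bᵢ = i gᵢ(x₀) f^(i-1)`. The Taylor-coefficient identity
`gᵢ' + (i+1) g_{i+1} = 0` (for `i < r`, and `gᵢ' = 0` for `i ≥ r` as `deg a = r`) gives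
`J (e₀ + b) = 0`, so `e₁, …, e_r` form a Jordan chain of length `r + 1`. Finally the direction
`e₀ + a'(x₀) e₁` is tangent to the level sets of `f`, so `J` maps it into `span(e₁, …, e_{r-1})`,
and therefore `J ^ (r + 1) = 0` with `r + 1 ≤ n`.
-/

open Polynomial

namespace Module.End

variable {R V : Type*} [CommRing R] [AddCommGroup V] [Module R V] {f : Module.End R V}
  {e : ℕ → V} {r : ℕ}

theorem pow_apply_eq_zero_of_chain (h1 : f (f (e 1)) = 0)
    (hchain : ∀ j, 1 ≤ j → j < r → f (e (j + 1)) = e j) :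
    ∀ j, 1 ≤ j → j ≤ r → (f ^ (j + 1)) (e j) = 0 := by
  intro j hj hjr
  induction j, hj using Nat.le_induction with
  | base => simpa [pow_succ, mul_apply] using h1
  | succ j hj ih => rw [pow_succ, mul_apply, hchain j hj hjr, ih (by omega)]

theorem pow_eq_zero_of_chain (hr : 1 ≤ r) (hspan : Submodule.span R (Set.range e) = ⊤)
    (h1 : f (f (e 1)) = 0) (hchain : ∀ j, 1 ≤ j → j < r → f (e (j + 1)) = e j) {α : R}
    (h0 : f (e 0 + α • e 1) ∈ Submodule.span R (e '' Set.Ico 1 r))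
    (hhigh : ∀ j, r < j → f (e j) = 0) : f ^ (r + 1) = 0 := by
  have hlow : ∀ j, 1 ≤ j → j ≤ r → (f ^ (r + 1)) (e j) = 0 := fun j hj hjr =>
    pow_map_zero_of_le (by omega) (pow_apply_eq_zero_of_chain h1 hchain j hj hjr)
  have hspan_ker : Submodule.span R (e '' Set.Ico 1 r) ≤ LinearMap.ker (f ^ r) := by
    rw [Submodule.span_le]
    rintro _ ⟨j, ⟨hj, hjr⟩, rfl⟩
    exact pow_map_zero_of_le (by omega) (pow_apply_eq_zero_of_chain h1 hchain j hj hjr.le)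
  have hzero : (f ^ (r + 1)) (e 0) = 0 := by
    have h := hspan_ker h0
    rw [LinearMap.mem_ker, ← mul_apply, ← pow_succ, map_add, map_smul, hlow 1 le_rfl hr,
      smul_zero, add_zero] at h
    exact h
  rw [← LinearMap.ker_eq_top, eq_top_iff, ← hspan, Submodule.span_le]
  rintro _ ⟨j, rfl⟩
  rcases Nat.eq_zero_or_pos j with rfl | hj
  · exact hzero
  · rcases le_or_gt j r with hjr | hjr
    · exact hlow j hj hjr
    · rw [SetLike.mem_coe, LinearMap.mem_ker, pow_succ, mul_apply, hhigh j hjr, map_zero]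

end Module.End

namespace VanDenEssen

open scoped Nat

section Coeff

variable {K : Type*} [Field K] (a : K[X]) (r : ℕ)

noncomputable def coeffPoly (i : ℕ) : K[X] :=
  if i ≤ r then C ((-1 : K) ^ (i + 1) / i !) * derivative^[i] a else 1

theorem coeffPoly_zero : coeffPoly a r 0 = -a := by
  simp [coeffPoly]

theorem coeffPoly_one [CharZero K] (hr : 1 ≤ r) : coeffPoly a r 1 = derivative a := by
  simp [coeffPoly, hr]

theorem derivative_coeffPoly [CharZero K] {i : ℕ} (hi : i < r) :
    derivative (coeffPoly a r i) = -C ((i : K) + 1) * coeffPoly a r (i + 1) := by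
  simp only [coeffPoly, hi.le, Nat.succ_le_of_lt hi, if_true, derivative_C_mul,
    ← Function.iterate_succ_apply' derivative, ← mul_assoc, ← C_mul, ← C_neg]
  congr 2
  push_cast [Nat.factorial_succ]
  field_simp
  ring

theorem derivative_coeffPoly_eq_zero (hdeg : a.natDegree ≤ r) {i : ℕ} (hi : r ≤ i) :
    derivative (coeffPoly a r i) = 0 := by
  unfold coeffPoly
  split_ifs with h
  · rw [derivative_C_mul, ← Function.iterate_succ_apply' derivative,
      iterate_derivative_eq_zero (by omega), mul_zero]
  · exact derivative_one

end Coeff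

section Map

variable {n : ℕ}

def basisVec (n j : ℕ) : Fin n → ℝ := fun i => if (i : ℕ) = j then 1 else 0

noncomputable def coord (n k : ℕ) : (Fin n → ℝ) →L[ℝ] ℝ :=
  if h : k < n then ContinuousLinearMap.proj ⟨k, h⟩ else 0

theorem coord_basisVec (k j : ℕ) :
    coord n k (basisVec n j) = if k < n ∧ k = j then 1 else 0 := by
  unfold coord basisVec
  split_ifs <;> simp_all; omega

theorem coord_apply {k : ℕ} (hk : k < n) (v : Fin n → ℝ) : coord n k v = v ⟨k, hk⟩ := by
  simp [coord, hk]

theorem mem_span_basisVec {S : Set ℕ} {v : Fin n → ℝ} (hv : ∀ i : Fin n, (i : ℕ) ∉ S → v i = 0) :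
    v ∈ Submodule.span ℝ (basisVec n '' S) := by
  have hsum : v = ∑ i, v i • basisVec n i := by
    ext k
    simp [basisVec, Finset.sum_apply, Fin.val_inj]
  rw [hsum]
  refine Submodule.sum_mem _ fun i _ => ?_
  by_cases hi : (i : ℕ) ∈ S
  · exact Submodule.smul_mem _ _ (Submodule.subset_span ⟨i, hi, rfl⟩)
  · simp [hv i hi]

theorem span_range_basisVec : Submodule.span ℝ (Set.range (basisVec n)) = ⊤ := by
  rw [eq_top_iff, ← (Pi.basisFun ℝ (Fin n)).span_eq]
  refine Submodule.span_mono ?_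
  rintro _ ⟨i, rfl⟩
  refine ⟨i, funext fun k => ?_⟩
  simp [basisVec, Pi.single_apply, Fin.ext_iff]

variable (a : ℝ[X]) (r : ℕ)

/-- The map `H` of the header, every row written as `[i < r] x_{i+1} + gᵢ(x₀) fⁱ`. -/
noncomputable def essenMap (x : Fin n → ℝ) (i : Fin n) : ℝ :=
  (if (i : ℕ) < r then coord n (i + 1) x else 0)
    + (coeffPoly a r i).eval (coord n 0 x) * (coord n 1 x - a.eval (coord n 0 x)) ^ (i : ℕ)

theorem fderiv_essenMap_apply (p v : Fin n → ℝ) (i : Fin n) :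
    fderiv ℝ (fun x => essenMap a r x i) p v =
      (if (i : ℕ) < r then coord n (i + 1) v else 0)
      + (derivative (coeffPoly a r i)).eval (coord n 0 p)
          * (coord n 1 p - a.eval (coord n 0 p)) ^ (i : ℕ) * coord n 0 v
      + (coeffPoly a r i).eval (coord n 0 p) * (i : ℕ)
          * (coord n 1 p - a.eval (coord n 0 p)) ^ ((i : ℕ) - 1)
          * (coord n 1 v - (derivative a).eval (coord n 0 p) * coord n 0 v) := by
  have hx0 := (coord n 0).hasFDerivAt (x := p)
  have hf := (coord n 1).hasFDerivAt (x := p) |>.sub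
    ((a.hasDerivAt (coord n 0 p)).comp_hasFDerivAt p hx0)
  have hterm := ((coeffPoly a r i).hasDerivAt (coord n 0 p)).comp_hasFDerivAt p hx0 |>.mul
    ((hasDerivAt_pow (i : ℕ) _).comp_hasFDerivAt p hf)
  have hshift : HasFDerivAt (fun x => if (i : ℕ) < r then coord n (i + 1) x else 0)
      (if (i : ℕ) < r then coord n (i + 1) else 0) p := by
    split_ifs
    · exact (coord n (i + 1)).hasFDerivAt
    · exact hasFDerivAt_const 0 p
  have hmap : HasFDerivAt (fun x => essenMap a r x i) _ p := hshift.add hterm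
  rw [hmap.fderiv]
  split_ifs <;>
    simp only [add_apply, zero_apply, smul_apply, sub_apply, Function.comp_apply,
      Pi.sub_apply, smul_eq_mul] <;>
    ring

end Map

section Jacobian

variable {ι : Type*}

noncomputable def jacobianEnd (F : (ι → ℝ) → ι → ℝ) (p : ι → ℝ) : Module.End ℝ (ι → ℝ) :=
  (ContinuousLinearMap.pi fun i => fderiv ℝ (fun q => F q i) p : (ι → ℝ) →L[ℝ] ι → ℝ)

theorem jacobianEnd_apply (F : (ι → ℝ) → ι → ℝ) (p v : ι → ℝ) (i : ι) :
    jacobianEnd F p v i = fderiv ℝ (fun q => F q i) p v := rfl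

theorem toMatrix'_jacobianEnd [Fintype ι] [DecidableEq ι] (F : (ι → ℝ) → ι → ℝ) (p : ι → ℝ) :
    LinearMap.toMatrix' (jacobianEnd F p) =
      Matrix.of fun i j => fderiv ℝ (fun q => F q i) p (Pi.single j 1) := by
  ext i j
  rw [LinearMap.toMatrix'_apply, jacobianEnd_apply, Matrix.of_apply]

theorem jacobian_pow_eq_zero [Fintype ι] [DecidableEq ι] {F : (ι → ℝ) → ι → ℝ} {p : ι → ℝ} {k : ℕ}
    (h : jacobianEnd F p ^ k = 0) :
    (Matrix.of fun i j => fderiv ℝ (fun q => F q i) p (Pi.single j 1)) ^ k = 0 := by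
  rw [← toMatrix'_jacobianEnd]
  change LinearMap.toMatrixAlgEquiv' (jacobianEnd F p) ^ k = 0
  rw [← map_pow, h, map_zero]

end Jacobian

section

variable {n : ℕ} (a : ℝ[X]) (r : ℕ)

theorem jacobianEnd_essenMap_basisVec (hrn : r < n) {j : ℕ} (hj : 2 ≤ j) (p : Fin n → ℝ) :
    jacobianEnd (essenMap a r) p (basisVec n j) =
      fun i : Fin n => if (i : ℕ) < r ∧ (i : ℕ) + 1 = j then (1 : ℝ) else 0 := by
  funext i
  rw [jacobianEnd_apply, fderiv_essenMap_apply]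
  simp only [coord_basisVec, show (0 : ℕ) ≠ j by omega, show (1 : ℕ) ≠ j by omega, and_false,
    if_false, mul_zero, add_zero, sub_zero]
  split_ifs <;> first | rfl | omega

theorem jacobianEnd_essenMap_basisVec_one (hr : 1 ≤ r) (hrn : r < n) (p : Fin n → ℝ) :
    jacobianEnd (essenMap a r) p (basisVec n 1) = fun i : Fin n =>
      (if (i : ℕ) = 0 then 1 else 0) + (coeffPoly a r i).eval (coord n 0 p) * (i : ℕ)
        * (coord n 1 p - a.eval (coord n 0 p)) ^ ((i : ℕ) - 1) := by
  funext i
  rw [jacobianEnd_apply, fderiv_essenMap_apply]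
  have h1n : 1 < n := by omega
  simp only [coord_basisVec, h1n, zero_lt_one.trans h1n, Nat.add_eq_right, true_and,
    zero_ne_one, and_false, if_true, if_false, mul_zero, add_zero, sub_zero, mul_one]
  split_ifs <;> first | rfl | omega

theorem jacobianEnd_essenMap_sq_basisVec_one (hr : 1 ≤ r) (hrn : r < n) (hdeg : a.natDegree ≤ r)
    (p : Fin n → ℝ) :
    jacobianEnd (essenMap a r) p (jacobianEnd (essenMap a r) p (basisVec n 1)) = 0 := by
  funext i
  rw [jacobianEnd_essenMap_basisVec_one a r hr hrn, jacobianEnd_apply, fderiv_essenMap_apply]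
  set x₀ := coord n 0 p
  set f₀ := coord n 1 p - a.eval x₀
  simp only [coord_apply (show 0 < n by omega), coord_apply (show 1 < n by omega),
    coeffPoly_one a r hr, Pi.zero_apply, one_ne_zero, if_true, if_false, Nat.cast_zero,
    Nat.cast_one, mul_zero, zero_add, Nat.sub_self, pow_zero, mul_one]
  by_cases hi : (i : ℕ) < r
  · rw [if_pos hi, coord_apply (by omega), derivative_coeffPoly a r hi,
      if_neg (Nat.succ_ne_zero _)]
    simp only [Nat.add_sub_cancel, eval_mul, eval_neg, eval_C, zero_mul, add_zero,
      mul_one, sub_self, mul_zero]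
    push_cast
    ring
  · rw [if_neg hi, derivative_coeffPoly_eq_zero a r hdeg (by omega)]
    simp

theorem jacobianEnd_essenMap_basisVec_zero_mem (hr : 1 ≤ r) (hrn : r < n) (hdeg : a.natDegree ≤ r)
    (p : Fin n → ℝ) :
    jacobianEnd (essenMap a r) p (basisVec n 0 + (derivative a).eval (coord n 0 p) • basisVec n 1) ∈
      Submodule.span ℝ (basisVec n '' Set.Ico 1 r) := by
  refine mem_span_basisVec fun i hi => ?_
  rw [jacobianEnd_apply, fderiv_essenMap_apply]
  have h1n : 1 < n := by omega
  simp only [map_add, map_smul, coord_basisVec, smul_eq_mul, h1n, zero_lt_one.trans h1n,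
    Nat.add_eq_zero_iff, Nat.add_eq_right, one_ne_zero, zero_ne_one, and_true, and_false,
    if_true, if_false, mul_zero, mul_one, add_zero, zero_add, sub_self]
  rw [Set.mem_Ico, not_and_or, not_le, Nat.lt_one_iff, not_lt] at hi
  rcases hi with hi | hi
  · simp [hi, coeffPoly_zero, h1n, show 0 < r by omega]
  · simp [derivative_coeffPoly_eq_zero a r hdeg hi, hi.not_gt]

theorem jacobianEnd_essenMap_pow_eq_zero (hr : 1 ≤ r) (hrn : r < n) (hdeg : a.natDegree ≤ r)
    (p : Fin n → ℝ) : jacobianEnd (essenMap a r) p ^ (r + 1) = 0 := by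
  refine Module.End.pow_eq_zero_of_chain hr span_range_basisVec
    (jacobianEnd_essenMap_sq_basisVec_one a r hr hrn hdeg p) (fun j hj hjr => ?_)
    (jacobianEnd_essenMap_basisVec_zero_mem a r hr hrn hdeg p) (fun j hj => ?_)
  · rw [jacobianEnd_essenMap_basisVec a r hrn (by omega)]
    funext i
    simp only [basisVec]
    split_ifs <;> first | rfl | omega
  · rw [jacobianEnd_essenMap_basisVec a r hrn (by omega)]
    funext i
    simp only [Pi.zero_apply]
    split_ifs <;> first | rfl | omega

end

end VanDenEssen

open VanDenEssen

/-- van den Essen's map H has nilpotent Jacobian at every point of ℝⁿ. -/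
theorem stmt9 (n : ℕ) (a : Polynomial ℝ) (r : ℕ)
    (hdeg : a.natDegree = r) (hr2 : 2 ≤ r) (hrn : r < n)
    (H : (Fin n → ℝ) → (Fin n → ℝ))
    (hH : ∀ x : Fin n → ℝ, ∀ i : Fin n,
      H x i =
        if h0 : i.val = 0 then
          x ⟨1, by omega⟩ - a.eval (x ⟨0, by omega⟩)
        else if h1 : i.val ≤ r - 1 then
          x ⟨i.val + 1, by omega⟩
            + ((-1 : ℝ) ^ (i.val + 1) / (Nat.factorial i.val)) *
              ((Polynomial.derivative^[i.val] a).eval (x ⟨0, by omega⟩)) *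
              (x ⟨1, by omega⟩ - a.eval (x ⟨0, by omega⟩)) ^ i.val
        else if h2 : i.val = r then
          ((-1 : ℝ) ^ (r + 1) / (Nat.factorial r)) *
            ((Polynomial.derivative^[r] a).eval (x ⟨0, by omega⟩)) *
            (x ⟨1, by omega⟩ - a.eval (x ⟨0, by omega⟩)) ^ r
        else
          (x ⟨1, by omega⟩ - a.eval (x ⟨0, by omega⟩)) ^ i.val) :
    ∀ p : Fin n → ℝ,
      (Matrix.of fun i j => fderiv ℝ (fun q => H q i) p (Pi.single j 1)) ^ n = 0 := by
  have hH_eq : H = essenMap a r := by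
    funext x i
    rw [hH, essenMap, coord_apply (show 0 < n by omega), coord_apply (show 1 < n by omega)]
    split_ifs with h_zero h_lt h_mid h_lt h_top h_lt h_lt <;> try omega
    · simp [coord_apply (show 1 < n by omega), h_zero, coeffPoly_zero, sub_eq_add_neg]
    · simp [coord_apply (show (i : ℕ) + 1 < n by omega), coeffPoly, h_lt.le]
    · simp [coeffPoly, h_top]
    · simp [coeffPoly, show ¬ (i : ℕ) ≤ r by omega]
  subst hH_eq
  exact fun p => jacobian_pow_eq_zero
    (pow_eq_zero_of_le (by omega) (jacobianEnd_essenMap_pow_eq_zero a r (by omega) hrn hdeg.le p))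
end

section
/- Let a, b ∈ ℝ with b ≠ 0, and define H : ℝ³ → ℝ³ by H(x,y,z) = (f, z + (a+2bx)f, −bf²) where f = y − ax − bx². Then JH(p) is nilpotent for every p ∈ ℝ³, and the components H₁, H₂, H₃ are linearly independent over ℝ (no nonzero (α₁,α₂,α₃) ∈ ℝ³ satisfies α₁H₁ + α₂H₂ + α₃H₃ ≡ 0). -/
open ContinuousLinearMap

private noncomputable abbrev pr (k : Fin 3) : (Fin 3 → ℝ) →L[ℝ] ℝ := ContinuousLinearMap.proj k

set_option maxHeartbeats 1000000 in
/-- the n = 3, r = 2 van den Essen map has nilpotent Jacobian everywhere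
and its components are linearly independent over ℝ. -/
theorem stmt10 (a b : ℝ) (hb : b ≠ 0)
    (H : (Fin 3 → ℝ) → (Fin 3 → ℝ))
    (hH : ∀ p, H p = ![p 1 - a * p 0 - b * (p 0) ^ 2,
                       p 2 + (a + 2 * b * p 0) * (p 1 - a * p 0 - b * (p 0) ^ 2),
                       -b * (p 1 - a * p 0 - b * (p 0) ^ 2) ^ 2]) :
    (∀ p : Fin 3 → ℝ,
      IsNilpotent (Matrix.of fun i j => fderiv ℝ (fun q => H q i) p (Pi.single j 1))) ∧
    (∀ c : Fin 3 → ℝ,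
      (∀ p, c 0 * H p 0 + c 1 * H p 1 + c 2 * H p 2 = 0) → c = 0) := by
  have hproj : ∀ (k : Fin 3) (p : Fin 3 → ℝ),
      HasFDerivAt (fun q : Fin 3 → ℝ => q k) (pr k) p :=
    fun k p => hasFDerivAt_apply k p
  constructor
  · intro p
    set s : ℝ := a + 2 * b * p 0 with hs
    set f : ℝ := p 1 - a * p 0 - b * p 0 ^ 2 with hfdef
    -- derivative of the base polynomial f
    have hf : HasFDerivAt (fun q : Fin 3 → ℝ => q 1 - a * q 0 - b * q 0 ^ 2)
        (((pr 1) - a • (pr 0)) - b • ((p 0) • (pr 0) + (p 0) • (pr 0))) p := by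
      have : (fun q : Fin 3 → ℝ => q 1 - a * q 0 - b * q 0 ^ 2)
          = fun q => q 1 - a * q 0 - b * (q 0 * q 0) := by
        funext q; ring
      rw [this]
      exact ((hproj 1 p).sub ((hproj 0 p).const_mul a)).sub
        (((hproj 0 p).mul (hproj 0 p)).const_mul b)
    have hs' : HasFDerivAt (fun q : Fin 3 → ℝ => a + 2 * b * q 0)
        ((0 : (Fin 3 → ℝ) →L[ℝ] ℝ) + (2 * b) • (pr 0)) p :=
      (hasFDerivAt_const a p).add ((hproj 0 p).const_mul (2 * b))
    have h1 : HasFDerivAt (fun q : Fin 3 → ℝ =>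
        q 2 + (a + 2 * b * q 0) * (q 1 - a * q 0 - b * q 0 ^ 2))
        ((pr 2) + (s • (((pr 1) - a • (pr 0)) - b • ((p 0) • (pr 0) + (p 0) • (pr 0)))
          + f • ((0 : (Fin 3 → ℝ) →L[ℝ] ℝ) + (2 * b) • (pr 0)))) p :=
      (hproj 2 p).add (hs'.mul hf)
    have h2 : HasFDerivAt (fun q : Fin 3 → ℝ =>
        -b * (q 1 - a * q 0 - b * q 0 ^ 2) ^ 2)
        ((-b) • (f • (((pr 1) - a • (pr 0)) - b • ((p 0) • (pr 0) + (p 0) • (pr 0)))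
          + f • (((pr 1) - a • (pr 0)) - b • ((p 0) • (pr 0) + (p 0) • (pr 0))))) p := by
      have : (fun q : Fin 3 → ℝ => -b * (q 1 - a * q 0 - b * q 0 ^ 2) ^ 2)
          = fun q => -b * ((q 1 - a * q 0 - b * q 0 ^ 2) * (q 1 - a * q 0 - b * q 0 ^ 2)) := by
        funext q; ring
      rw [this]
      exact (hf.mul hf).const_mul (-b)
    have hM : (Matrix.of fun i j => fderiv ℝ (fun q => H q i) p (Pi.single j 1))
        = !![-s, 1, 0; 2*b*f - s^2, s, 1; 2*b*f*s, -(2*b*f), 0] := by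
      ext i j
      fin_cases i
      · have e : (fun q => H q 0) = fun q : Fin 3 → ℝ => q 1 - a * q 0 - b * q 0 ^ 2 := by
          funext q; rw [hH]; simp
        show (fderiv ℝ (fun q => H q 0) p) (Pi.single j 1)
          = !![-s, 1, 0; 2*b*f - s^2, s, 1; 2*b*f*s, -(2*b*f), 0] 0 j
        rw [e, hf.fderiv]
        fin_cases j <;>
          simp [ContinuousLinearMap.sub_apply, ContinuousLinearMap.add_apply,
            ContinuousLinearMap.smul_apply, ContinuousLinearMap.proj_apply,
            Pi.single_apply, smul_eq_mul] <;> ring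
      · have e : (fun q => H q 1) = fun q : Fin 3 → ℝ =>
            q 2 + (a + 2 * b * q 0) * (q 1 - a * q 0 - b * q 0 ^ 2) := by
          funext q; rw [hH]; simp
        show (fderiv ℝ (fun q => H q 1) p) (Pi.single j 1)
          = !![-s, 1, 0; 2*b*f - s^2, s, 1; 2*b*f*s, -(2*b*f), 0] 1 j
        rw [e, h1.fderiv]
        fin_cases j <;>
          simp [ContinuousLinearMap.sub_apply, ContinuousLinearMap.add_apply,
            ContinuousLinearMap.smul_apply, ContinuousLinearMap.proj_apply,
            Pi.single_apply, smul_eq_mul] <;> ring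
      · have e : (fun q => H q 2) = fun q : Fin 3 → ℝ =>
            -b * (q 1 - a * q 0 - b * q 0 ^ 2) ^ 2 := by
          funext q; rw [hH]; simp
        show (fderiv ℝ (fun q => H q 2) p) (Pi.single j 1)
          = !![-s, 1, 0; 2*b*f - s^2, s, 1; 2*b*f*s, -(2*b*f), 0] 2 j
        rw [e, h2.fderiv]
        fin_cases j <;>
          simp [ContinuousLinearMap.sub_apply, ContinuousLinearMap.add_apply,
            ContinuousLinearMap.smul_apply, ContinuousLinearMap.proj_apply,
            Pi.single_apply, smul_eq_mul] <;> ring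
    rw [hM]
    refine ⟨3, ?_⟩
    ext i j
    fin_cases i <;> fin_cases j <;>
      simp [pow_succ, Matrix.mul_apply, Fin.sum_univ_three] <;> ring
  · intro c hc
    have h1 := hc ![0, 0, 1]
    have h2 := hc ![0, 1, 0]
    have h3 := hc ![0, -1, 0]
    simp [hH] at h1 h2 h3
    have hc2 : c 2 * b = 0 := by linarith
    have hc2' : c 2 = 0 := by
      rcases mul_eq_zero.mp hc2 with h | h
      · exact h
      · exact absurd h hb
    have hX : c 1 * a = 0 := by rw [h1]; ring
    have hc0 : c 0 = 0 := by linarith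
    funext i
    fin_cases i
    · simpa using hc0
    · simpa using h1
    · simpa using hc2'
end

section
/- Let λ < 0. The vector field Y(u,v,w) = (w, λv − w², 2λw + v − λ²u) on ℝ³ arises from X = λI + H_{3,2} (with the map of formula (li) with a = 0, b = 1) via the polynomial change of coordinates φ(x₁,x₂,x₃) = (x₁, x₃ − λx₁², λx₁ + x₂ − x₁²); that is, Dφ(p)·X(p) = Y(φ(p)) for all p ∈ ℝ³. -/
theorem fderiv_changeOfCoords_apply (l : ℝ) (p v : ℝ × ℝ × ℝ) :
    fderiv ℝ (fun q : ℝ × ℝ × ℝ => (q.1, q.2.2 - l * q.1 ^ 2, l * q.1 + q.2.1 - q.1 ^ 2)) p v =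
      (v.1, v.2.2 - 2 * l * p.1 * v.1, l * v.1 + v.2.1 - 2 * p.1 * v.1) := by
  have hx := hasFDerivAt_fst (𝕜 := ℝ) (p := p)
  have hy := (hasFDerivAt_snd (𝕜 := ℝ) (p := p)).fst
  have hz := (hasFDerivAt_snd (𝕜 := ℝ) (p := p)).snd
  have hφ : HasFDerivAt
      (fun q : ℝ × ℝ × ℝ => (q.1, q.2.2 - l * q.1 ^ 2, l * q.1 + q.2.1 - q.1 ^ 2)) _ p :=
    hx.prodMk ((hz.sub ((hx.pow 2).const_mul l)).prodMk (((hx.const_mul l).add hy).sub (hx.pow 2)))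
  rw [hφ.fderiv]
  simp only [ContinuousLinearMap.prod_apply, ContinuousLinearMap.coe_fst',
    ContinuousLinearMap.coe_snd', ContinuousLinearMap.comp_apply, sub_apply,
    add_apply, smul_apply, smul_eq_mul, nsmul_eq_mul]
  ext <;> dsimp only <;> ring

theorem stmt11_general (l : ℝ)
    (X Y φ : ℝ × ℝ × ℝ → ℝ × ℝ × ℝ)
    (hX : ∀ p : ℝ × ℝ × ℝ, X p =
      (l * p.1 + (p.2.1 - p.1 ^ 2),
       l * p.2.1 + p.2.2 + 2 * p.1 * (p.2.1 - p.1 ^ 2),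
       l * p.2.2 - (p.2.1 - p.1 ^ 2) ^ 2))
    (hY : ∀ p : ℝ × ℝ × ℝ, Y p =
      (p.2.2, l * p.2.1 - p.2.2 ^ 2, 2 * l * p.2.2 + p.2.1 - l ^ 2 * p.1))
    (hφ : ∀ p : ℝ × ℝ × ℝ, φ p =
      (p.1, p.2.2 - l * p.1 ^ 2, l * p.1 + p.2.1 - p.1 ^ 2)) :
    ∀ p, fderiv ℝ φ p (X p) = Y (φ p) := by
  intro p
  rw [funext hφ, fderiv_changeOfCoords_apply, hX, hY]
  ext <;> dsimp only <;> ring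

/-- φ pushes X = λI + H_{3,2} (a = 0, b = 1) forward to
Y(u,v,w) = (w, λv − w², 2λw + v − λ²u). -/
theorem stmt11 (l : ℝ) (hl : l < 0)
    (X Y φ : ℝ × ℝ × ℝ → ℝ × ℝ × ℝ)
    (hX : ∀ p : ℝ × ℝ × ℝ, X p =
      (l * p.1 + (p.2.1 - p.1 ^ 2),
       l * p.2.1 + p.2.2 + 2 * p.1 * (p.2.1 - p.1 ^ 2),
       l * p.2.2 - (p.2.1 - p.1 ^ 2) ^ 2))
    (hY : ∀ p : ℝ × ℝ × ℝ, Y p =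
      (p.2.2, l * p.2.1 - p.2.2 ^ 2, 2 * l * p.2.2 + p.2.1 - l ^ 2 * p.1))
    (hφ : ∀ p : ℝ × ℝ × ℝ, φ p =
      (p.1, p.2.2 - l * p.1 ^ 2, l * p.1 + p.2.1 - p.1 ^ 2)) :
    ∀ p, fderiv ℝ φ p (X p) = Y (φ p) :=
  stmt11_general l X Y φ hX hY hφ
end

section
/- Let λ < 0, A = 2λ, s₀ = 1/(512λ³), p₀ = −1/(8λ), q₀ = 11/(16λ²). On the face {(s,q,p) : As = p², s₀ ≤ s ≤ 0, 0 ≤ q ≤ q₀, 0 ≤ p ≤ p₀} of the region P, the quantity A·W₁ − 2p·W₃ is nonnegative, where W(s,q,p) = (−s(λs−p²), s(p−λq)+qp², s(λp+1−λ²q)+p³). Explicitly, if As = p² then A·W₁ − 2p·W₃ = −(p³/A)·[p(A+3λ) + 2(1−λ²q)] ≥ 0. -/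
/-!
On the face `A s = p²` one may substitute `s = p² / A`, which turns `A·W₁ − 2p·W₃` into
`−(p³/A)·[p(A + 3λ) + 2(1 − λ²q)]`. For `λ < 0` and `A = 2λ` the bracket is antitone in both
`p` and `q` and vanishes at the corner `(p₀, q₀)`, so it is nonnegative on the face, while
`−p³/A ≥ 0` because `p ≥ 0 > A`.
-/

lemma face_derivative_eq {A l s q p : ℝ} (hA : A ≠ 0) (hface : A * s = p ^ 2) :
    A * (-s * (l * s - p ^ 2)) - 2 * p * (s * (l * p + 1 - l ^ 2 * q) + p ^ 3)
      = -(p ^ 3 / A) * (p * (A + 3 * l) + 2 * (1 - l ^ 2 * q)) := by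
  obtain rfl : s = p ^ 2 / A := by rw [eq_div_iff hA, mul_comm, hface]
  field_simp
  ring

lemma face_bracket_corner {l : ℝ} (hl : l ≠ 0) :
    -1 / (8 * l) * (2 * l + 3 * l) + 2 * (1 - l ^ 2 * (11 / (16 * l ^ 2))) = 0 := by
  field_simp
  ring

lemma face_bracket_nonneg {l q p : ℝ} (hl : l < 0)
    (hq : q ≤ 11 / (16 * l ^ 2)) (hp : p ≤ -1 / (8 * l)) :
    0 ≤ p * (2 * l + 3 * l) + 2 * (1 - l ^ 2 * q) := by
  have hp' : -1 / (8 * l) * (2 * l + 3 * l) ≤ p * (2 * l + 3 * l) :=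
    mul_le_mul_of_nonpos_right hp (by linarith)
  have hq' : l ^ 2 * q ≤ l ^ 2 * (11 / (16 * l ^ 2)) :=
    mul_le_mul_of_nonneg_left hq (sq_nonneg l)
  linarith [face_bracket_corner hl.ne]

theorem stmt14_general (l : ℝ) (hl : l < 0) (s q p : ℝ)
    (hface : 2 * l * s = p ^ 2)
    (hq2 : q ≤ 11 / (16 * l ^ 2))
    (hp1 : 0 ≤ p) (hp2 : p ≤ -1 / (8 * l)) :
    (2 * l) * (-s * (l * s - p ^ 2))
        - 2 * p * (s * (l * p + 1 - l ^ 2 * q) + p ^ 3)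
      = -(p ^ 3 / (2 * l)) * (p * (2 * l + 3 * l) + 2 * (1 - l ^ 2 * q)) ∧
    0 ≤ (2 * l) * (-s * (l * s - p ^ 2))
        - 2 * p * (s * (l * p + 1 - l ^ 2 * q) + p ^ 3) := by
  have hA : 2 * l < 0 := by linarith
  have heq := face_derivative_eq (l := l) (q := q) hA.ne hface
  refine ⟨heq, heq ▸ mul_nonneg ?_ (face_bracket_nonneg hl hq2 hp2)⟩
  exact neg_nonneg.mpr (div_nonpos_of_nonneg_of_nonpos (pow_nonneg hp1 3) hA.le)

/-- on the face As = p² of P, the derivative A·W₁ − 2p·W₃ of As − p²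
along W equals −(p³/A)[p(A+3λ) + 2(1−λ²q)] and is nonnegative. -/
theorem stmt14 (l : ℝ) (hl : l < 0) (s q p : ℝ)
    (hface : 2 * l * s = p ^ 2)
    (hs1 : 1 / (512 * l ^ 3) ≤ s) (hs2 : s ≤ 0)
    (hq1 : 0 ≤ q) (hq2 : q ≤ 11 / (16 * l ^ 2))
    (hp1 : 0 ≤ p) (hp2 : p ≤ -1 / (8 * l)) :
    (2 * l) * (-s * (l * s - p ^ 2))
        - 2 * p * (s * (l * p + 1 - l ^ 2 * q) + p ^ 3)
      = -(p ^ 3 / (2 * l)) * (p * (2 * l + 3 * l) + 2 * (1 - l ^ 2 * q)) ∧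
    0 ≤ (2 * l) * (-s * (l * s - p ^ 2))
        - 2 * p * (s * (l * p + 1 - l ^ 2 * q) + p ^ 3) :=
  stmt14_general l hl s q p hface hq2 hp1 hp2
end

section
/- Let 0 < λ < 1 and let a, b, g ∈ ℝ[z] be polynomials. Define F : ℝ³ → ℝ³ by F(x,y,z) = (A(z)·(x,y), λz), where A(z) is the 2×2 matrix with entries A₁₁ = λ − a(z)b(z)g(z), A₁₂ = −b(z)²g(z), A₂₁ = a(z)²g(z), A₂₂ = λ + a(z)b(z)g(z). Then for every (x,y,z) ∈ ℝ³, the iterates Fⁿ(x,y,z) converge to (0,0,0) as n → ∞. -/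
/-!
Write `A(z) = λ I + g(z) v(z) w(z)ᵀ` with `v = (-b, a)` and `w = (a, b)`; since `w ⬝ v = 0`,
the rank-one part is nilpotent. Along an orbit `z_n = λⁿ z → 0`, and the scalar
`T_n = w(z_n) ⬝ (x_n, y_n)` satisfies
`T_{n+1} = λ T_n + (w(z_{n+1}) - w(z_n)) ⬝ (x_{n+1}, y_{n+1})`,
whose error coefficient tends to `0` by continuity of `a` and `b`. So `s_n = |x_n| + |y_n|` and
`t_n = |T_n|` obey a triangular system of inequalities with diagonal `λ` and a vanishing entry
below the diagonal, and `s_n + K t_n` eventually contracts by the factor `(1 + λ) / 2` once `K`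
is large.
-/

open Filter Topology

lemma abs_mul_add_mul_le_mul_add_abs (a b x y : ℝ) :
    |a * x + b * y| ≤ (|a| + |b|) * (|x| + |y|) := by
  calc |a * x + b * y| ≤ |a| * |x| + |b| * |y| := by
        simpa only [abs_mul] using abs_add_le (a * x) (b * y)
    _ ≤ (|a| + |b|) * (|x| + |y|) := by
        nlinarith [abs_nonneg a, abs_nonneg b, abs_nonneg x, abs_nonneg y]

lemma tendsto_zero_of_triangular_recurrence_le {l C : ℝ} {s t ε : ℕ → ℝ} (hl : l < 1)
    (hC : 0 ≤ C) (hs : ∀ n, 0 ≤ s n) (ht : ∀ n, 0 ≤ t n) (hε : Tendsto ε atTop (𝓝 0))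
    (hs_succ : ∀ n, s (n + 1) ≤ l * s n + C * t n)
    (ht_succ : ∀ n, t (n + 1) ≤ l * t n + ε n * (s n + t n)) :
    Tendsto s atTop (𝓝 0) ∧ Tendsto t atTop (𝓝 0) := by
  set η := (1 - l) / 2
  have hη : 0 < η := by simp only [η]; linarith
  set K := C / η + 1
  have hK : 0 < K := by positivity
  have hKη : K * η = C + η := by simp only [K]; field_simp
  set V := fun n => s n + K * t n
  have hV : ∀ n, 0 ≤ V n := fun n => by have := hs n; have := ht n; positivity
  -- `K` is chosen so that `V` contracts by `l + η < 1` once `K * ε n ≤ η / 2`.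
  have hV_succ : ∀ᶠ n in atTop, ‖V (n + 1)‖ ≤ (l + η) * ‖V n‖ := by
    filter_upwards [hε.eventually (gt_mem_nhds (div_pos hη (mul_pos two_pos hK)))]
      with n hn
    have hKε : K * ε n ≤ η / 2 := by
      rw [lt_div_iff₀ (by positivity)] at hn; linarith
    rw [Real.norm_of_nonneg (hV _), Real.norm_of_nonneg (hV _)]
    calc s (n + 1) + K * t (n + 1)
        ≤ (l * s n + C * t n) + K * (l * t n + ε n * (s n + t n)) :=
          add_le_add (hs_succ n) (mul_le_mul_of_nonneg_left (ht_succ n) hK.le)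
      _ = (l + K * ε n) * s n + (C + K * l + K * ε n) * t n := by ring
      _ ≤ (l + η) * s n + (C + K * l + η) * t n := by
          have := hs n; have := ht n; gcongr <;> linarith
      _ = (l + η) * (s n + K * t n) := by linear_combination (t n) * hKη.symm
  have hV_lim : Tendsto V atTop (𝓝 0) :=
    (summable_of_ratio_norm_eventually_le (by simp only [η]; linarith) hV_succ).tendsto_atTop_zero
  refine ⟨squeeze_zero hs (fun n => ?_) hV_lim, ?_⟩
  · have := ht n; simp only [V]; nlinarith
  · refine squeeze_zero ht (fun n => ?_) (by simpa using hV_lim.div_const K)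
    rw [le_div_iff₀ hK]; have := hs n; simp only [V]; linarith

lemma tendsto_zero_of_nilpotent_perturbation {l a₀ b₀ c₀ : ℝ} {α β γ x y : ℕ → ℝ}
    (hl₀ : 0 ≤ l) (hl : l < 1) (hα : Tendsto α atTop (𝓝 a₀)) (hβ : Tendsto β atTop (𝓝 b₀))
    (hγ : Tendsto γ atTop (𝓝 c₀))
    (hx : ∀ n, x (n + 1) = (l - α n * β n * γ n) * x n + (-β n ^ 2 * γ n) * y n)
    (hy : ∀ n, y (n + 1) = α n ^ 2 * γ n * x n + (l + α n * β n * γ n) * y n) :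
    Tendsto x atTop (𝓝 0) ∧ Tendsto y atTop (𝓝 0) := by
  set T := fun n => α n * x n + β n * y n
  set s := fun n => |x n| + |y n|
  set δ := fun n => |α (n + 1) - α n| + |β (n + 1) - β n|
  have hx' : ∀ n, x (n + 1) = l * x n - γ n * β n * T n := fun n => by rw [hx]; ring
  have hy' : ∀ n, y (n + 1) = l * y n + γ n * α n * T n := fun n => by rw [hy]; ring
  obtain ⟨C, hC⟩ := isBounded_iff_forall_norm_le.mp
    (Metric.isBounded_range_of_tendsto _ (hγ.mul (hα.abs.add hβ.abs)))
  replace hC : ∀ n, |γ n| * (|α n| + |β n|) ≤ C := fun n => by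
    have hn := hC _ ⟨n, rfl⟩
    rwa [Real.norm_eq_abs, abs_mul, abs_of_nonneg (by positivity : 0 ≤ |α n| + |β n|)] at hn
  have hC₀ : 0 ≤ C := le_trans (by positivity) (hC 0)
  have hs_succ : ∀ n, s (n + 1) ≤ l * s n + C * |T n| := fun n => by
    simp only [s, hx', hy']
    calc |l * x n - γ n * β n * T n| + |l * y n + γ n * α n * T n|
        ≤ (l * |x n| + |γ n| * |β n| * |T n|) + (l * |y n| + |γ n| * |α n| * |T n|) := by
          gcongr
          · simpa only [abs_mul, abs_of_nonneg hl₀] using abs_sub (l * x n) (γ n * β n * T n)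
          · simpa only [abs_mul, abs_of_nonneg hl₀] using abs_add_le (l * y n) (γ n * α n * T n)
      _ = l * (|x n| + |y n|) + |γ n| * (|α n| + |β n|) * |T n| := by ring
      _ ≤ l * (|x n| + |y n|) + C * |T n| := by gcongr; exact hC n
  -- Nilpotency: `w(z_n) ⬝ v(z_n) = 0`, so the perturbation is invisible to `T` at the same time.
  have hT_succ : ∀ n, T (n + 1) =
      l * T n + ((α (n + 1) - α n) * x (n + 1) + (β (n + 1) - β n) * y (n + 1)) := fun n => by
    have : α n * x (n + 1) + β n * y (n + 1) = l * T n := by rw [hx', hy']; ring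
    simp only [T]; linear_combination this
  have ht_succ : ∀ n, |T (n + 1)| ≤ l * |T n| + δ n * (l + C) * (s n + |T n|) := fun n => by
    have hδ : 0 ≤ δ n := by positivity
    calc |T (n + 1)| ≤ l * |T n| + δ n * s (n + 1) := by
          rw [hT_succ]
          refine (abs_add_le _ _).trans ?_
          rw [abs_mul, abs_of_nonneg hl₀]
          gcongr
          exact abs_mul_add_mul_le_mul_add_abs _ _ _ _
      _ ≤ l * |T n| + δ n * (l * s n + C * |T n|) := by gcongr; exact hs_succ n
      _ ≤ l * |T n| + δ n * (l + C) * (s n + |T n|) := by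
          have hsn : 0 ≤ s n := by positivity
          nlinarith [mul_nonneg hδ (mul_nonneg hl₀ (abs_nonneg (T n))),
            mul_nonneg hδ (mul_nonneg hC₀ hsn)]
  have hδ : Tendsto (fun n => δ n * (l + C)) atTop (𝓝 0) := by
    have hα' := ((tendsto_add_atTop_iff_nat 1).mpr hα).sub hα
    have hβ' := ((tendsto_add_atTop_iff_nat 1).mpr hβ).sub hβ
    simpa [δ] using ((hα'.abs.add hβ'.abs).mul_const (l + C))
  obtain ⟨hs, -⟩ := tendsto_zero_of_triangular_recurrence_le hl hC₀ (fun n => by positivity)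
    (fun n => abs_nonneg (T n)) hδ hs_succ ht_succ
  exact ⟨squeeze_zero_norm (fun n => le_add_of_nonneg_right (abs_nonneg (y n))) hs,
    squeeze_zero_norm (fun n => le_add_of_nonneg_left (abs_nonneg (x n))) hs⟩

/-- Theorem DY1, c = d = 0: the origin is a global attractor of the
discrete dynamical system generated by F(x,y,z) = (A(z)(x,y), λz). -/
theorem stmt19 (l : ℝ) (h1 : 0 < l) (h2 : l < 1) (a b g : Polynomial ℝ)
    (F : ℝ × ℝ × ℝ → ℝ × ℝ × ℝ)
    (hF : ∀ p : ℝ × ℝ × ℝ, F p =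
      ((l - a.eval p.2.2 * b.eval p.2.2 * g.eval p.2.2) * p.1
         + (-(b.eval p.2.2) ^ 2 * g.eval p.2.2) * p.2.1,
       (a.eval p.2.2) ^ 2 * g.eval p.2.2 * p.1
         + (l + a.eval p.2.2 * b.eval p.2.2 * g.eval p.2.2) * p.2.1,
       l * p.2.2)) :
    ∀ p : ℝ × ℝ × ℝ,
      Filter.Tendsto (fun n => F^[n] p) Filter.atTop (nhds ((0 : ℝ), (0 : ℝ), (0 : ℝ))) := by
  intro p
  have hstep : ∀ n, F^[n + 1] p = F (F^[n] p) := fun n => Function.iterate_succ_apply' F n p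
  have hz : ∀ n, (F^[n] p).2.2 = l ^ n * p.2.2 := fun n => by
    induction n with
    | zero => simp
    | succ n ih => rw [hstep, hF, ih, pow_succ']; ring
  have hz_lim : Tendsto (fun n => (F^[n] p).2.2) atTop (𝓝 0) := by
    simpa [hz] using (tendsto_pow_atTop_nhds_zero_of_lt_one h1.le h2).mul_const p.2.2
  have heval (q : Polynomial ℝ) : Tendsto (fun n => q.eval (F^[n] p).2.2) atTop (𝓝 (q.eval 0)) :=
    (q.continuous.tendsto 0).comp hz_lim
  obtain ⟨hx, hy⟩ := tendsto_zero_of_nilpotent_perturbation h1.le h2 (heval a) (heval b) (heval g)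
    (x := fun n => (F^[n] p).1) (y := fun n => (F^[n] p).2.1)
    (fun n => by simp only [hstep, hF]) (fun n => by simp only [hstep, hF])
  exact hx.prodMk_nhds (hy.prodMk_nhds hz_lim)
end
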